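/- Let s ≥ 1 be an integer, let G be a theta-free graph, let (a,S,{L}) be an (s,1)-palanquin in G and let x_L be an end of L. Assume that no two vertices in S have a common neighbor in L, and that either every x ∈ S is L-bad, or every x ∈ S is L-ugly. Then there exists a bijection π between {1,…,s} and S such that (S, L, x_L, π) is an s-alignment in G. -/

import Mathlib

open SimpleGraph

universe u v

/-- `G` contains `H` as an induced subgraph: there is a graph embedding of `H` into `G`. -/
def ContainsInduced {V : Type u} {W : Type v} (G : SimpleGraph V) (H : SimpleGraph W) : Prop :=
  Nonempty (H ↪g G)

/-- `G` has a hole (an induced cycle on at least four vertices) on `n` vertices. -/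
def HasHole {V : Type u} (G : SimpleGraph V) (n : ℕ) : Prop :=
  4 ≤ n ∧ ContainsInduced G (cycleGraph n)

/-- `G` is chordal: it has no hole. -/
def Chordal {V : Type u} (G : SimpleGraph V) : Prop :=
  ∀ n : ℕ, ¬ HasHole G n

/-- `G` is even-hole-free: it has no hole on an even number of vertices. -/
def EvenHoleFree {V : Type u} (G : SimpleGraph V) : Prop :=
  ∀ n : ℕ, Even n → ¬ HasHole G n

/-- A tree decomposition of `G`: a tree `T` together with bags indexed by the nodes of `T`,
covering all vertices and edges of `G`, such that for every vertex the set of nodes whose bag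
contains it induces a connected (hence nonempty) subgraph of `T`. -/
structure TreeDecomp {V : Type u} (G : SimpleGraph V) where
  ι : Type u
  T : SimpleGraph ι
  isTree : T.IsTree
  bag : ι → Set V
  mem_bag : ∀ v : V, ∃ i, v ∈ bag i
  edge_bag : ∀ ⦃x y : V⦄, G.Adj x y → ∃ i, x ∈ bag i ∧ y ∈ bag i
  conn : ∀ v : V, (T.induce {i | v ∈ bag i}).Connected

/-- `G` has treewidth at most `w`. -/
def TreewidthLe {V : Type u} (G : SimpleGraph V) (w : ℕ) : Prop :=
  ∃ D : TreeDecomp G, ∀ i, (D.bag i).ncard ≤ w + 1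

/-- The cone over `F`: add one new vertex adjacent to all vertices of `F`. -/
def coneGraph {α : Type u} (F : SimpleGraph α) : SimpleGraph (Option α) where
  Adj x y :=
    match x, y with
    | some a, some b => F.Adj a b
    | some _, none => True
    | none, some _ => True
    | none, none => False
  symm := by
    constructor
    rintro (_ | a) (_ | b) h
    · exact h
    · trivial
    · trivial
    · exact F.adj_symm h
  loopless := by
    constructor
    rintro (_ | a) h
    · exact h
    · exact F.ne_of_adj h rfl

/-- The diamond: `K₄` minus an edge. -/
def diamondGraph : SimpleGraph (Fin 4) :=
  (⊤ : SimpleGraph (Fin 4)).deleteEdges {s(0, 1)}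
/-- An induced path in `G` from `x` to `y`, given as an embedding of a path graph whose first
vertex is `x` and whose last vertex is `y`. -/
structure IPath {V : Type u} (G : SimpleGraph V) (x y : V) where
  n : ℕ
  pos : 0 < n
  f : pathGraph n ↪g G
  hx : f ⟨0, pos⟩ = x
  hy : f ⟨n - 1, Nat.sub_lt pos Nat.one_pos⟩ = y

namespace IPath

variable {V : Type u} {G : SimpleGraph V} {x y : V}

/-- The vertex set of the path. -/
def support (P : IPath G x y) : Set V := Set.range P.f

/-- The interior of the path: its vertices other than the two ends. -/
def interior (P : IPath G x y) : Set V :=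
  {v | ∃ i : Fin P.n, 0 < (i : ℕ) ∧ (i : ℕ) < P.n - 1 ∧ P.f i = v}

/-- The length (number of edges) of the path. -/
def length (P : IPath G x y) : ℕ := P.n - 1

end IPath

/-- An induced path in `G` (with unspecified ends). -/
structure IndPath {V : Type u} (G : SimpleGraph V) where
  n : ℕ
  pos : 0 < n
  f : pathGraph n ↪g G

namespace IndPath

variable {V : Type u} {G : SimpleGraph V}

/-- The vertex set of the path. -/
def support (P : IndPath G) : Set V := Set.range P.f

/-- The first vertex of the path. -/
def first (P : IndPath G) : V := P.f ⟨0, P.pos⟩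

/-- The last vertex of the path. -/
def last (P : IndPath G) : V := P.f ⟨P.n - 1, Nat.sub_lt P.pos Nat.one_pos⟩

end IndPath

/-- The set of neighbors of `v` lying in the set `H` (i.e. the neighbors of `v` in the
subgraph of `G` induced by `H`, for `v` possibly outside `H`). -/
def NbrsIn {V : Type u} (G : SimpleGraph V) (H : Set V) (v : V) : Set V :=
  H ∩ G.neighborSet v

/-- `v` is `H`-good: it has exactly one neighbor in `H`. -/
def GoodFor {V : Type u} (G : SimpleGraph V) (H : Set V) (v : V) : Prop :=
  (NbrsIn G H v).ncard = 1

/-- `v` is `H`-bad: its set of neighbors in `H` is a clique with at least two vertices. -/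
def BadFor {V : Type u} (G : SimpleGraph V) (H : Set V) (v : V) : Prop :=
  G.IsClique (NbrsIn G H v) ∧ 2 ≤ (NbrsIn G H v).ncard

/-- `v` is `H`-ugly: its set of neighbors in `H` is not a clique. -/
def UglyFor {V : Type u} (G : SimpleGraph V) (H : Set V) (v : V) : Prop :=
  ¬ G.IsClique (NbrsIn G H v)

/-- `A` is anticomplete to `B`: there is no edge of `G` with one end in `A` and one in `B`. -/
def Anticomplete {V : Type u} (G : SimpleGraph V) (A B : Set V) : Prop :=
  ∀ a ∈ A, ∀ b ∈ B, ¬ G.Adj a b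

/-- The data of a theta with ends `a, b` and paths `P₁, P₂, P₃`: the ends are distinct and
non-adjacent, each path has length at least two, and the interiors of the paths are pairwise
disjoint and pairwise anticomplete. -/
def ThetaWitness {V : Type u} (G : SimpleGraph V) (a b : V)
    (P₁ P₂ P₃ : IPath G a b) : Prop :=
  a ≠ b ∧ ¬ G.Adj a b ∧
  2 ≤ P₁.length ∧ 2 ≤ P₂.length ∧ 2 ≤ P₃.length ∧
  Disjoint P₁.interior P₂.interior ∧ Disjoint P₁.interior P₃.interior ∧
  Disjoint P₂.interior P₃.interior ∧
  Anticomplete G P₁.interior P₂.interior ∧ Anticomplete G P₁.interior P₃.interior ∧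
  Anticomplete G P₂.interior P₃.interior

/-- There is a theta in `G`. -/
def HasTheta {V : Type u} (G : SimpleGraph V) : Prop :=
  ∃ (a b : V) (P₁ P₂ P₃ : IPath G a b), ThetaWitness G a b P₁ P₂ P₃

/-- The data of a prism with triangles `a₁a₂a₃`, `b₁b₂b₃` and paths `P₁, P₂, P₃`, where `Pᵢ`
has ends `aᵢ, bᵢ`, the paths are pairwise disjoint, and for `i ≠ j` the only edges between
`Pᵢ` and `Pⱼ` are `aᵢaⱼ` and `bᵢbⱼ`. -/
def PrismWitness {V : Type u} (G : SimpleGraph V) (a₁ a₂ a₃ b₁ b₂ b₃ : V)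
    (P₁ : IPath G a₁ b₁) (P₂ : IPath G a₂ b₂) (P₃ : IPath G a₃ b₃) : Prop :=
  G.Adj a₁ a₂ ∧ G.Adj a₁ a₃ ∧ G.Adj a₂ a₃ ∧
  G.Adj b₁ b₂ ∧ G.Adj b₁ b₃ ∧ G.Adj b₂ b₃ ∧
  Disjoint P₁.support P₂.support ∧ Disjoint P₁.support P₃.support ∧
  Disjoint P₂.support P₃.support ∧
  (∀ u ∈ P₁.support, ∀ v_ ∈ P₂.support, G.Adj u v_ → (u = a₁ ∧ v_ = a₂) ∨ (u = b₁ ∧ v_ = b₂)) ∧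
  (∀ u ∈ P₁.support, ∀ v_ ∈ P₃.support, G.Adj u v_ → (u = a₁ ∧ v_ = a₃) ∨ (u = b₁ ∧ v_ = b₃)) ∧
  (∀ u ∈ P₂.support, ∀ v_ ∈ P₃.support, G.Adj u v_ → (u = a₂ ∧ v_ = a₃) ∨ (u = b₂ ∧ v_ = b₃))

/-- There is a prism in `G`. -/
def HasPrism {V : Type u} (G : SimpleGraph V) : Prop :=
  ∃ (a₁ a₂ a₃ b₁ b₂ b₃ : V) (P₁ : IPath G a₁ b₁) (P₂ : IPath G a₂ b₂) (P₃ : IPath G a₃ b₃),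
    PrismWitness G a₁ a₂ a₃ b₁ b₂ b₃ P₁ P₂ P₃

/-- The data of a wheel: a hole (given by an embedding `f` of a cycle on `n ≥ 4` vertices)
together with a vertex `v` outside the hole having at least three neighbors in it. -/
def WheelWitness {V : Type u} (G : SimpleGraph V) (n : ℕ) (f : cycleGraph n ↪g G)
    (v : V) : Prop :=
  4 ≤ n ∧ v ∉ Set.range f ∧ 3 ≤ (NbrsIn G (Set.range f) v).ncard

/-- There is an even wheel in `G`: a wheel whose center has an even number of neighbors
in the hole. -/
def HasEvenWheel {V : Type u} (G : SimpleGraph V) : Prop :=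
  ∃ (n : ℕ) (f : cycleGraph n ↪g G) (v : V),
    WheelWitness G n f v ∧ Even ((NbrsIn G (Set.range f) v).ncard)

/-- `G` belongs to the class `𝓔` of (C₄, theta, prism, even wheel)-free graphs. -/
def MemE {V : Type u} (G : SimpleGraph V) : Prop :=
  ¬ ContainsInduced G (cycleGraph 4) ∧ ¬ HasTheta G ∧ ¬ HasPrism G ∧ ¬ HasEvenWheel G
/-- The whole graph `G` is a theta. -/
def IsThetaGraph {V : Type u} (G : SimpleGraph V) : Prop :=
  ∃ (a b : V) (P₁ P₂ P₃ : IPath G a b), ThetaWitness G a b P₁ P₂ P₃ ∧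
    ∀ u : V, u ∈ P₁.support ∪ P₂.support ∪ P₃.support

/-- The whole graph `G` is a prism. -/
def IsPrismGraph {V : Type u} (G : SimpleGraph V) : Prop :=
  ∃ (a₁ a₂ a₃ b₁ b₂ b₃ : V) (P₁ : IPath G a₁ b₁) (P₂ : IPath G a₂ b₂) (P₃ : IPath G a₃ b₃),
    PrismWitness G a₁ a₂ a₃ b₁ b₂ b₃ P₁ P₂ P₃ ∧
    ∀ u : V, u ∈ P₁.support ∪ P₂.support ∪ P₃.support

/-- The whole graph `G` is (the graph of) an even wheel. -/
def IsEvenWheelGraph {V : Type u} (G : SimpleGraph V) : Prop :=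
  ∃ (n : ℕ) (f : cycleGraph n ↪g G) (v : V),
    WheelWitness G n f v ∧ Even ((NbrsIn G (Set.range f) v).ncard) ∧
    ∀ u : V, u ∈ insert v (Set.range f)

/-- The graph `G△^{z₁}_{z₂}`: delete `z₁` and `z₂` and add a new vertex (represented by
`none`) whose neighborhood is exactly `N_G(z₁) ∩ N_G(z₂)`. -/
def triMinor {V : Type u} (G : SimpleGraph V) (z₁ z₂ : V) :
    SimpleGraph (Option {v : V // v ≠ z₁ ∧ v ≠ z₂}) where
  Adj x y :=
    match x, y with
    | some a, some b => G.Adj a b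
    | some a, none => G.Adj z₁ a ∧ G.Adj z₂ a
    | none, some b => G.Adj z₁ b ∧ G.Adj z₂ b
    | none, none => False
  symm := by
    constructor
    rintro (_ | a) (_ | b) h
    · exact h
    · exact h
    · exact h
    · exact G.adj_symm h
  loopless := by
    constructor
    rintro (_ | a) h
    · exact h
    · exact G.ne_of_adj h rfl

/-- `v` is a `d`-substantial vertex of `G`: there is a hole `C` of `G ∖ {v}` in which `v`
has at least `d + 1` neighbors and such that `C ∖ N_C(v)` is disconnected. -/
def Substantial {V : Type u} (G : SimpleGraph V) (d : ℕ) (v : V) : Prop :=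
  ∃ (n : ℕ) (f : cycleGraph n ↪g G), 4 ≤ n ∧ v ∉ Set.range f ∧
    d + 1 ≤ (NbrsIn G (Set.range f) v).ncard ∧
    ¬ (G.induce (Set.range f \ G.neighborSet v)).Connected

/-- A `w`-kaleidoscope `(a, x, y, 𝒲)` in `G`: `x–a–y` is an induced path, `𝒲` is a family of
`w` pairwise internally disjoint induced paths from `x` to `y` avoiding `a`, and `a` is
anticomplete to the interior of every path of the family. -/
structure Kaleidoscope {V : Type u} (G : SimpleGraph V) (w : ℕ) where
  a : V
  x : V
  y : V
  hxy : x ≠ y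
  hnadj : ¬ G.Adj x y
  hax : G.Adj a x
  hay : G.Adj a y
  W : Fin w → IPath G x y
  notA : ∀ i, a ∉ (W i).support
  intDisj : ∀ i j, i ≠ j → Disjoint (W i).interior (W j).interior
  aAnti : ∀ i, ∀ u ∈ (W i).interior, ¬ G.Adj a u

/-- Restriction of a kaleidoscope to the subfamily of paths indexed by an injection `g`. -/
def Kaleidoscope.restrict {V : Type u} {G : SimpleGraph V} {k w : ℕ}
    (K : Kaleidoscope G k) (g : Fin w → Fin k) (hg : Function.Injective g) :
    Kaleidoscope G w where
  a := K.a
  x := K.x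
  y := K.y
  hxy := K.hxy
  hnadj := K.hnadj
  hax := K.hax
  hay := K.hay
  W := fun i => K.W (g i)
  notA := fun i => K.notA (g i)
  intDisj := fun i j hij => K.intDisj (g i) (g j) (fun e => hij (hg e))
  aAnti := fun i => K.aAnti (g i)

/-- The set `Z` is `d`-mirrored by the kaleidoscope `K = (a, x, y, 𝒲)`: `Z` avoids `a` and
all paths of `𝒲`; `a` has at most one neighbor in `Z`; and every `z ∈ Z` is anticomplete to
`N_W[x] ∪ N_W[y]` and has at least `d` neighbors in `W`, for every `W ∈ 𝒲`. -/
def Mirrored {V : Type u} (G : SimpleGraph V) {w : ℕ} (K : Kaleidoscope G w) (d : ℕ)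
    (Z : Set V) : Prop :=
  K.a ∉ Z ∧
  (∀ i, ∀ z ∈ Z, z ∉ (K.W i).support) ∧
  (Z ∩ G.neighborSet K.a).ncard ≤ 1 ∧
  ∀ z ∈ Z, ∀ i,
    (∀ u ∈ insert K.x (NbrsIn G (K.W i).support K.x) ∪
        insert K.y (NbrsIn G (K.W i).support K.y), ¬ G.Adj z u) ∧
    d ≤ (NbrsIn G (K.W i).support z).ncard
/-- An `(s, l)`-palanquin `(a, S, ℒ)` in `G`: `S` is a stable set of `s` neighbors of `a`,
and `ℒ` is a family of `l` pairwise disjoint induced paths, all avoiding `S ∪ {a}`, such that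
`a` is anticomplete to every path of `ℒ` and every vertex of `S` has a neighbor in every
path of `ℒ`. -/
structure Palanquin {V : Type u} (G : SimpleGraph V) (s l : ℕ) where
  a : V
  S : Set V
  L : Fin l → IndPath G
  sub : S ⊆ G.neighborSet a
  stable : ∀ u ∈ S, ∀ w ∈ S, ¬ G.Adj u w
  card : S.ncard = s
  disj : ∀ i j, i ≠ j → Disjoint (L i).support (L j).support
  avoid : ∀ i, Disjoint (L i).support (insert a S)
  anti : ∀ i, ∀ u ∈ (L i).support, ¬ G.Adj a u
  nbr : ∀ x ∈ S, ∀ i, ∃ u ∈ (L i).support, G.Adj x u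

/-- The ordering condition of an alignment: for `i < j`, all neighbors of `π i` on the path
appear strictly before all neighbors of `π j`, positions being counted from the first vertex
of `P` if `rev = false`, and from the last vertex if `rev = true`. -/
def AlignOrder {V : Type u} (G : SimpleGraph V) {s : ℕ} (P : IndPath G)
    (π : Fin s → V) (rev : Bool) : Prop :=
  ∀ i j : Fin s, i < j → ∀ ii jj : Fin P.n,
    G.Adj (π i) (P.f ii) → G.Adj (π j) (P.f jj) →
    (if rev then (jj : ℕ) < (ii : ℕ) else (ii : ℕ) < (jj : ℕ))

/-- `(S, P, x, π)` is an `s`-alignment in `G`: `S` is a stable set of size `s` enumerated by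
the bijection `π`, the induced path `P` avoids `S`, has `x` as an end, every vertex of `S`
has a neighbor in `P`, and traversing `P` starting at `x`, for `i < j` all neighbors of
`π i` appear strictly before all neighbors of `π j`. -/
def IsAlignment {V : Type u} (G : SimpleGraph V) (s : ℕ) (S : Set V) (P : IndPath G)
    (x : V) (π : Fin s → V) : Prop :=
  (∀ u ∈ S, ∀ w ∈ S, ¬ G.Adj u w) ∧ S.ncard = s ∧
  Function.Injective π ∧ Set.range π = S ∧
  Disjoint S P.support ∧
  (∀ u ∈ S, ∃ w ∈ P.support, G.Adj u w) ∧
  ((x = P.first ∧ AlignOrder G P π false) ∨ (x = P.last ∧ AlignOrder G P π true))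

/-- `N` is a `k`-tree: either a complete graph on `k` vertices, or a graph on `h > k`
vertices admitting a bijection onto `{0, …, h-1}` such that every vertex among the first
`h - k` has its set of forward neighbors a clique of exactly `k` vertices. -/
def IsKTree {α : Type u} [Fintype α] (k : ℕ) (N : SimpleGraph α) : Prop :=
  (Fintype.card α = k ∧ N = ⊤) ∨
  (k < Fintype.card α ∧ ∃ e : α ≃ Fin (Fintype.card α),
    ∀ w : α, (e w : ℕ) < Fintype.card α - k →
      N.IsClique {u | N.Adj w u ∧ e w < e u} ∧ {u | N.Adj w u ∧ e w < e u}.ncard = k)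

/-- `N`, a graph on `Fin m`, is a `k`-tree whose defining ordering is the natural order of
`Fin m`. -/
def IsOrderedKTree (k m : ℕ) (N : SimpleGraph (Fin m)) : Prop :=
  (m = k ∧ N = ⊤) ∨
  (k < m ∧ ∀ i : Fin m, (i : ℕ) < m - k →
    N.IsClique {j | N.Adj i j ∧ i < j} ∧ {j | N.Adj i j ∧ i < j}.ncard = k)

/-- The set `S` is (the vertex set of) a blurry copy of the ordered `2`-tree `N` in `G`:
there is an enumeration `e` of `S` such that the copy `Y` of `N` transported along `e` is a
spanning subgraph of `G[S]`, and whenever `i < j` and `e i, e j` are adjacent in `G` but not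
in `Y`, the vertex `e j` is adjacent in `G` to both forward neighbors of `e i` in `Y`. -/
def BlurryCopy {V : Type u} {m : ℕ} (G : SimpleGraph V) (N : SimpleGraph (Fin m))
    (S : Set V) : Prop :=
  ∃ e : Fin m → V, Function.Injective e ∧ Set.range e = S ∧
    (∀ i j : Fin m, N.Adj i j → G.Adj (e i) (e j)) ∧
    (∀ i j : Fin m, i < j → G.Adj (e i) (e j) → ¬ N.Adj i j →
      ∀ k : Fin m, N.Adj i k → i < k → G.Adj (e j) (e k))

/-! Order `S` by first neighbour on `L`. This is an alignment unless some `u, w ∈ S` straddle: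
a neighbour of `w` lies strictly between two neighbours of `u`. A bad `u` cannot straddle, its
neighbours being consecutive on `L`. For an ugly `w`, a straddle gives a theta. Call a *bridge* a
stretch of `L` whose first vertex is the only neighbour on it of one of `u, w`, and whose last
vertex is the only one of the other; with `u` and `w` added it is an induced path. Two bridges at
distance at least two, together with `u a w`, form a theta with ends `u, w`. The straddle yields
bridges `u → w` and `w → u` around the middle neighbour of `w`; since `w` is ugly it has a further
neighbour, which either pushes them apart or gives a third bridge beyond them. This only fails
when `u` sees the vertex right after the end `g c` of a bridge, and then `u (g (c+1)) (g c)`,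
`u a w (g c)` and the bridge form a theta with ends `u, g c`. -/

section InducedPathSeq

variable {V : Type*} {G : SimpleGraph V} {g : ℕ → V} {m : ℕ}

structure IsInducedPathSeq (G : SimpleGraph V) (g : ℕ → V) (m : ℕ) : Prop where
  injOn : Set.InjOn g (Set.Iic m)
  adj_iff_of_lt : ∀ a b, a < b → b ≤ m → (G.Adj (g a) (g b) ↔ b = a + 1)

namespace IsInducedPathSeq

theorem adj_iff (hg : IsInducedPathSeq G g m) {a b : ℕ} (ha : a ≤ m) (hb : b ≤ m) :
    G.Adj (g a) (g b) ↔ a + 1 = b ∨ b + 1 = a := by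
  rcases lt_trichotomy a b with h | rfl | h
  · rw [hg.adj_iff_of_lt a b h hb]; omega
  · simp
  · rw [G.adj_comm, hg.adj_iff_of_lt b a h ha]; omega

theorem exists_iPath (hg : IsInducedPathSeq G g m) {x y : V} (h₀ : g 0 = x) (hm : g m = y) :
    ∃ P : IPath G x y, P.length = m ∧ P.interior ⊆ g '' Set.Ioo 0 m := by
  refine ⟨⟨m + 1, m.succ_pos, ⟨⟨fun i => g i, fun i j h => Fin.ext
    (hg.injOn (Nat.lt_succ_iff.1 i.2) (Nat.lt_succ_iff.1 j.2) h)⟩, ?_⟩, h₀, hm⟩, rfl, ?_⟩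
  · intro i j
    rw [pathGraph_adj]
    exact hg.adj_iff (Nat.lt_succ_iff.1 i.2) (Nat.lt_succ_iff.1 j.2)
  · rintro _ ⟨i, h₁, h₂, rfl⟩
    exact ⟨i, ⟨h₁, h₂⟩, rfl⟩

theorem reverse (hg : IsInducedPathSeq G g m) : IsInducedPathSeq G (fun k => g (m - k)) m where
  injOn a ha b hb h := by
    have := hg.injOn (show m - a ≤ m by omega) (show m - b ≤ m by omega) h
    simp only [Set.mem_Iic] at ha hb
    omega
  adj_iff_of_lt a b hab hb := by
    rw [G.adj_comm, hg.adj_iff_of_lt _ _ (by omega) (by omega)]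
    omega

theorem cons_segment (hg : IsInducedPathSeq G g m) {x : V} {i j : ℕ} (hij : i ≤ j) (hj : j ≤ m)
    (hx : ∀ k, i ≤ k → k ≤ j → g k ≠ x) (hadj : ∀ k, i ≤ k → k ≤ j → (G.Adj x (g k) ↔ k = i)) :
    IsInducedPathSeq G (fun k => if k = 0 then x else g (i + k - 1)) (j - i + 1) where
  injOn a ha b hb h := by
    simp only [Set.mem_Iic] at ha hb h
    split_ifs at h with h₁ h₂ h₂
    · omega
    · exact absurd h.symm (hx _ (by omega) (by omega))
    · exact absurd h (hx _ (by omega) (by omega))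
    · have := hg.injOn (show i + a - 1 ≤ m by omega) (show i + b - 1 ≤ m by omega) h
      omega
  adj_iff_of_lt a b hab hb := by
    split_ifs with h₁ h₂
    · omega
    · rw [hadj _ (by omega) (by omega)]; omega
    · omega
    · rw [hg.adj_iff_of_lt _ _ (by omega) (by omega)]; omega

theorem snoc (hg : IsInducedPathSeq G g m) {y : V} (hy : ∀ k ≤ m, g k ≠ y)
    (hadj : ∀ k ≤ m, G.Adj (g k) y ↔ k = m) :
    IsInducedPathSeq G (fun k => if k ≤ m then g k else y) (m + 1) where
  injOn a ha b hb h := by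
    simp only [Set.mem_Iic] at ha hb h
    split_ifs at h with h₁ h₂ h₂
    · exact hg.injOn h₁ h₂ h
    · exact absurd h (hy _ h₁)
    · exact absurd h.symm (hy _ h₂)
    · omega
  adj_iff_of_lt a b hab hb := by
    split_ifs with h₁ h₂
    · exact hg.adj_iff_of_lt a b hab h₂
    · rw [hadj a h₁]; omega
    · omega
    · omega

theorem disjoint_image (hg : IsInducedPathSeq G g m) {A B : Set ℕ} (hB : B ⊆ Set.Iic m)
    (h : ∀ k ∈ A, ∀ l ∈ B, k < l) : Disjoint (g '' A) (g '' B) := by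
  rw [Set.disjoint_left]
  rintro _ ⟨k, hk, rfl⟩ ⟨l, hl, he⟩
  have hkl := h k hk l hl
  have : l = k := hg.injOn (hB hl) (show k ≤ m from (hkl.trans_le (hB hl)).le) he
  omega

theorem anticomplete_image (hg : IsInducedPathSeq G g m) {A B : Set ℕ} (hB : B ⊆ Set.Iic m)
    (h : ∀ k ∈ A, ∀ l ∈ B, k + 2 ≤ l) : Anticomplete G (g '' A) (g '' B) := by
  rintro _ ⟨k, hk, rfl⟩ _ ⟨l, hl, rfl⟩
  have hkl := h k hk l hl
  have hlm : l ≤ m := hB hl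
  rw [hg.adj_iff (by omega) hlm]
  omega

end IsInducedPathSeq

end InducedPathSeq

section Theta

variable {V : Type*} {G : SimpleGraph V}

theorem exists_iPath_three {v₀ v₁ v₂ : V} (h₀₁ : G.Adj v₀ v₁) (h₁₂ : G.Adj v₁ v₂)
    (h₀₂ : ¬ G.Adj v₀ v₂) (hne : v₀ ≠ v₂) :
    ∃ P : IPath G v₀ v₂, P.length = 2 ∧ P.interior ⊆ {v₁} := by
  have hg : IsInducedPathSeq G (fun k => if k = 0 then v₀ else if k = 1 then v₁ else v₂) 2 := by
    refine ⟨fun a ha b hb h => ?_, fun a b hab hb => ?_⟩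
    · simp only [Set.mem_Iic] at ha hb
      interval_cases a <;> interval_cases b <;> simp_all [h₀₁.ne, h₁₂.ne, h₁₂.ne.symm, h₀₁.ne.symm]
    · interval_cases b <;> interval_cases a <;> simp_all
  obtain ⟨P, hl, hi⟩ := hg.exists_iPath rfl rfl
  refine ⟨P, hl, hi.trans ?_⟩
  rintro _ ⟨k, hk, rfl⟩
  obtain rfl : k = 1 := by simp only [Set.mem_Ioo] at hk; omega
  rfl

theorem exists_iPath_four {v₀ v₁ v₂ v₃ : V} (h₀₁ : G.Adj v₀ v₁) (h₁₂ : G.Adj v₁ v₂)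
    (h₂₃ : G.Adj v₂ v₃) (h₀₂ : ¬ G.Adj v₀ v₂) (h₀₃ : ¬ G.Adj v₀ v₃) (h₁₃ : ¬ G.Adj v₁ v₃)
    (hne₀₂ : v₀ ≠ v₂) (hne₀₃ : v₀ ≠ v₃) (hne₁₃ : v₁ ≠ v₃) :
    ∃ P : IPath G v₀ v₃, P.length = 3 ∧ P.interior ⊆ {v₁, v₂} := by
  have hg : IsInducedPathSeq G
      (fun k => if k = 0 then v₀ else if k = 1 then v₁ else if k = 2 then v₂ else v₃) 3 := by
    refine ⟨fun a ha b hb h => ?_, fun a b hab hb => ?_⟩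
    · simp only [Set.mem_Iic] at ha hb
      interval_cases a <;> interval_cases b <;>
        simp_all [h₀₁.ne, h₁₂.ne, h₂₃.ne, h₁₂.ne.symm, h₀₁.ne.symm, h₂₃.ne.symm, eq_comm]
    · interval_cases b <;> interval_cases a <;> simp_all
  obtain ⟨P, hl, hi⟩ := hg.exists_iPath rfl rfl
  refine ⟨P, hl, hi.trans ?_⟩
  rintro _ ⟨k, hk, rfl⟩
  simp only [Set.mem_Ioo] at hk
  obtain rfl | rfl : k = 1 ∨ k = 2 := by omega
  all_goals simp

theorem hasTheta_of_interior_subset {x y : V} (hne : x ≠ y) (hxy : ¬ G.Adj x y)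
    (P₁ P₂ P₃ : IPath G x y) (h₁ : 2 ≤ P₁.length) (h₂ : 2 ≤ P₂.length) (h₃ : 2 ≤ P₃.length)
    {I₁ I₂ I₃ : Set V} (hI₁ : P₁.interior ⊆ I₁) (hI₂ : P₂.interior ⊆ I₂)
    (hI₃ : P₃.interior ⊆ I₃) (d₁₂ : Disjoint I₁ I₂) (d₁₃ : Disjoint I₁ I₃)
    (d₂₃ : Disjoint I₂ I₃) (a₁₂ : Anticomplete G I₁ I₂) (a₁₃ : Anticomplete G I₁ I₃)
    (a₂₃ : Anticomplete G I₂ I₃) : HasTheta G :=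
  ⟨x, y, P₁, P₂, P₃, hne, hxy, h₁, h₂, h₃, d₁₂.mono hI₁ hI₂, d₁₃.mono hI₁ hI₃,
    d₂₃.mono hI₂ hI₃, fun a ha b hb => a₁₂ a (hI₁ ha) b (hI₂ hb),
    fun a ha b hb => a₁₃ a (hI₁ ha) b (hI₃ hb), fun a ha b hb => a₂₃ a (hI₂ ha) b (hI₃ hb)⟩

end Theta

section Bridge

variable {V : Type*} {G : SimpleGraph V} {g : ℕ → V} {m : ℕ} {x y : V} {i j : ℕ}

/-- With `x`, `y` nonadjacent and off `g`, this makes `x, g i, …, g j, y` an induced path. -/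
structure IsBridge (G : SimpleGraph V) (g : ℕ → V) (x y : V) (i j : ℕ) : Prop where
  lt : i < j
  adj_left : G.Adj x (g i)
  adj_right : G.Adj y (g j)
  not_adj_left : ∀ k, i < k → k ≤ j → ¬ G.Adj x (g k)
  not_adj_right : ∀ k, i ≤ k → k < j → ¬ G.Adj y (g k)

/-- Take the first neighbour of `y` from `i` on, and the last neighbour of `x` before it. -/
theorem exists_isBridge (hx : G.Adj x (g i)) (hy : G.Adj y (g j)) (hij : i ≤ j)
    (hxy : ∀ k ≤ j, ¬ (G.Adj x (g k) ∧ G.Adj y (g k))) :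
    ∃ i' j', i ≤ i' ∧ j' ≤ j ∧ IsBridge G g x y i' j' := by
  classical
  have hex : ∃ k, i ≤ k ∧ G.Adj y (g k) := ⟨j, hij, hy⟩
  obtain ⟨hij', hyj'⟩ := Nat.find_spec hex
  have hj' : Nat.find hex ≤ j := Nat.find_min' hex ⟨hij, hy⟩
  have hii' : i ≤ Nat.findGreatest (fun k => G.Adj x (g k)) (Nat.find hex) :=
    Nat.le_findGreatest hij' hx
  have hxi' := Nat.findGreatest_spec (P := fun k => G.Adj x (g k)) hij' hx
  have hi'j' := Nat.findGreatest_le (P := fun k => G.Adj x (g k)) (Nat.find hex)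
  refine ⟨_, _, hii', hj', lt_of_le_of_ne hi'j' fun h => hxy _ hj' ⟨h ▸ hxi', hyj'⟩, hxi', hyj',
    fun k hk hk' => Nat.findGreatest_is_greatest hk hk', fun k hk hk' hyk => ?_⟩
  exact Nat.find_min hex hk' ⟨by omega, hyk⟩

theorem IsBridge.reverse (hb : IsBridge G g x y i j) (hj : j ≤ m) :
    IsBridge G (fun k => g (m - k)) y x (m - j) (m - i) where
  lt := by have := hb.lt; omega
  adj_left := by rw [Nat.sub_sub_self hj]; exact hb.adj_right
  adj_right := by rw [Nat.sub_sub_self (by have := hb.lt; omega)]; exact hb.adj_left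
  not_adj_left k hk hk' := hb.not_adj_right _ (by omega) (by omega)
  not_adj_right k hk hk' := hb.not_adj_left _ (by omega) (by omega)

theorem IsBridge.exists_iPath (hb : IsBridge G g x y i j) (hg : IsInducedPathSeq G g m)
    (hj : j ≤ m) (hx : ∀ k ≤ m, g k ≠ x) (hy : ∀ k ≤ m, g k ≠ y) (hne : x ≠ y)
    (hxy : ¬ G.Adj x y) : ∃ P : IPath G x y, 2 ≤ P.length ∧ P.interior ⊆ g '' Set.Icc i j := by
  have hij := hb.lt
  have hseg := hg.cons_segment hij.le hj (fun k _ hk => hx k (by omega)) fun k hk hk' =>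
    ⟨fun h => by_contra fun hki => hb.not_adj_left k (by omega) hk' h, fun h => h ▸ hb.adj_left⟩
  have hpath := hseg.snoc (y := y) (fun k hk => by split_ifs; exacts [hne, hy _ (by omega)])
    fun k hk => by
      split_ifs with hk₀
      · simp only [hxy, false_iff]; omega
      · exact ⟨fun h => by_contra fun hkj => hb.not_adj_right _ (by omega) (by omega) h.symm,
          fun h => by subst h; rw [show i + (j - i + 1) - 1 = j by omega]; exact hb.adj_right.symm⟩
  obtain ⟨P, hl, hi⟩ := hpath.exists_iPath (x := x) (y := y) (by simp) (by simp)
  refine ⟨P, by omega, hi.trans ?_⟩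
  rintro _ ⟨k, ⟨hk, hk'⟩, rfl⟩
  refine ⟨i + k - 1, ⟨by omega, by omega⟩, ?_⟩
  simp [show k ≤ j - i + 1 by omega, show k ≠ 0 by omega]

end Bridge

section PalanquinPair

variable {V : Type*} {G : SimpleGraph V} {g : ℕ → V} {m : ℕ} {a u w : V}

/-- The `(2,1)`-palanquin `(a, {u, w}, {g 0, …, g m})`, with `u` and `w` having no common
neighbour on the path. -/
structure IsPalanquinPair (G : SimpleGraph V) (g : ℕ → V) (m : ℕ) (a u w : V) : Prop where
  path : IsInducedPathSeq G g m
  adj_left : G.Adj a u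
  adj_right : G.Adj a w
  not_adj : ¬ G.Adj u w
  ne : u ≠ w
  apex_ne : ∀ k ≤ m, g k ≠ a
  not_adj_apex : ∀ k ≤ m, ¬ G.Adj a (g k)
  left_ne : ∀ k ≤ m, g k ≠ u
  right_ne : ∀ k ≤ m, g k ≠ w
  no_common : ∀ k ≤ m, ¬ (G.Adj u (g k) ∧ G.Adj w (g k))

namespace IsPalanquinPair

theorem reverse (hP : IsPalanquinPair G g m a u w) :
    IsPalanquinPair G (fun k => g (m - k)) m a u w where
  path := hP.path.reverse
  adj_left := hP.adj_left
  adj_right := hP.adj_right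
  not_adj := hP.not_adj
  ne := hP.ne
  apex_ne k _ := hP.apex_ne _ (Nat.sub_le m k)
  not_adj_apex k _ := hP.not_adj_apex _ (Nat.sub_le m k)
  left_ne k _ := hP.left_ne _ (Nat.sub_le m k)
  right_ne k _ := hP.right_ne _ (Nat.sub_le m k)
  no_common k _ := hP.no_common _ (Nat.sub_le m k)

theorem exists_iPath_of_isBridge (hP : IsPalanquinPair G g m a u w) {i j : ℕ}
    (hb : IsBridge G g u w i j) (hj : j ≤ m) :
    ∃ P : IPath G u w, 2 ≤ P.length ∧ P.interior ⊆ g '' Set.Icc i j :=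
  hb.exists_iPath hP.path hj hP.left_ne hP.right_ne hP.ne hP.not_adj

theorem exists_iPath_of_isBridge_swap (hP : IsPalanquinPair G g m a u w) {i j : ℕ}
    (hb : IsBridge G g w u i j) (hj : j ≤ m) :
    ∃ P : IPath G u w, 2 ≤ P.length ∧ P.interior ⊆ g '' Set.Icc i j := by
  obtain ⟨P, hl, hi⟩ := hP.reverse.exists_iPath_of_isBridge (hb.reverse hj) (Nat.sub_le _ _)
  refine ⟨P, hl, hi.trans ?_⟩
  rintro _ ⟨k, hk, rfl⟩
  simp only [Set.mem_Icc] at hk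
  have := hb.lt
  exact ⟨m - k, ⟨by omega, by omega⟩, rfl⟩

theorem anticomplete_singleton_image (hP : IsPalanquinPair G g m a u w) {A : Set ℕ}
    (hA : A ⊆ Set.Iic m) : Anticomplete G {a} (g '' A) := by
  rintro _ rfl _ ⟨k, hk, rfl⟩
  exact hP.not_adj_apex k (hA hk)

theorem hasTheta_of_separated (hP : IsPalanquinPair G g m a u w) (P Q : IPath G u w)
    (hPl : 2 ≤ P.length) (hQl : 2 ≤ Q.length) {i₁ j₁ i₂ j₂ : ℕ}
    (hPi : P.interior ⊆ g '' Set.Icc i₁ j₁) (hQi : Q.interior ⊆ g '' Set.Icc i₂ j₂)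
    (hsep : j₁ + 2 ≤ i₂) (hij₂ : i₂ ≤ j₂) (hj₂ : j₂ ≤ m) : HasTheta G := by
  obtain ⟨R, hRl, hRi⟩ := exists_iPath_three hP.adj_left.symm hP.adj_right hP.not_adj hP.ne
  have hI₁ : Set.Icc i₁ j₁ ⊆ Set.Iic m := fun k hk => by simp only [Set.mem_Icc] at hk; simp; omega
  have hI₂ : Set.Icc i₂ j₂ ⊆ Set.Iic m := fun k hk => by simp only [Set.mem_Icc] at hk; simp; omega
  have hsingle : ∀ {A : Set ℕ}, A ⊆ Set.Iic m → Disjoint {a} (g '' A) := fun hA =>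
    Set.disjoint_singleton_left.2 fun ⟨k, hk, he⟩ => hP.apex_ne k (hA hk) he
  refine hasTheta_of_interior_subset hP.ne hP.not_adj R P Q (by omega) hPl hQl hRi hPi hQi
    (hsingle hI₁) (hsingle hI₂) (hP.path.disjoint_image hI₂ ?_)
    (hP.anticomplete_singleton_image hI₁) (hP.anticomplete_singleton_image hI₂)
    (hP.path.anticomplete_image hI₂ ?_)
  all_goals
    intro k hk l hl
    simp only [Set.mem_Icc] at hk hl
    omega

/-- When `u` sees `g (c + 1)` right after the bridge ends at `g c`, the theta has ends `u` and
`g c`, its paths being `u a w (g c)`, `u (g (c + 1)) (g c)` and `u (g p) … (g c)`. -/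
theorem hasTheta_of_isBridge_of_adj_succ (hP : IsPalanquinPair G g m a u w) {p c : ℕ}
    (hb : IsBridge G g u w p c) (hc : c + 1 ≤ m) (hu : G.Adj u (g (c + 1))) : HasTheta G := by
  have hpc := hb.lt
  have huc : ¬ G.Adj u (g c) := hb.not_adj_left c hpc le_rfl
  have hgc : G.Adj (g (c + 1)) (g c) := (hP.path.adj_iff hc (by omega)).2 (Or.inr rfl)
  obtain ⟨A, hAl, hAi⟩ := exists_iPath_four hP.adj_left.symm hP.adj_right hb.adj_right
    hP.not_adj huc (hP.not_adj_apex c (by omega)) hP.ne (hP.left_ne c (by omega)).symm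
    (hP.apex_ne c (by omega)).symm
  obtain ⟨C, hCl, hCi⟩ := exists_iPath_three hu hgc huc (hP.left_ne c (by omega)).symm
  have hseg := hP.path.cons_segment hpc.le (by omega) (fun k _ hk => hP.left_ne k (by omega))
    fun k hk hk' => ⟨fun h => by_contra fun hki => hb.not_adj_left k (by omega) hk' h,
      fun h => h ▸ hb.adj_left⟩
  obtain ⟨B, hBl, hBi⟩ := hseg.exists_iPath (x := u) (y := g c) (by simp)
    (by simp [show p + (c - p) = c by omega])
  have hBi' : B.interior ⊆ g '' Set.Ico p c := hBi.trans <| by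
    rintro _ ⟨k, ⟨hk, hk'⟩, rfl⟩
    exact ⟨p + k - 1, ⟨by omega, by omega⟩, by simp [show k ≠ 0 by omega]⟩
  have hIco : Set.Ico p c ⊆ Set.Iic m := fun k hk => by
    simp only [Set.mem_Ico] at hk; simp only [Set.mem_Iic]; omega
  have hsucc : {c + 1} ⊆ Set.Iic m := by simpa using hc
  refine hasTheta_of_interior_subset (hP.left_ne c (by omega)).symm huc A B C (by omega)
    (by omega) (by omega) hAi hBi' (hCi.trans (by simp)) ?_ ?_
    (hP.path.disjoint_image hsucc (by simp; omega)) ?_ ?_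
    (hP.path.anticomplete_image hsucc (by simp))
  · rw [Set.disjoint_left]
    rintro _ (rfl | rfl) ⟨k, hk, he⟩
    exacts [hP.apex_ne k (hIco hk) he, hP.right_ne k (hIco hk) he]
  · simp only [Set.image_singleton, Set.disjoint_singleton_right, Set.mem_insert_iff,
      Set.mem_singleton_iff, not_or]
    exact ⟨hP.apex_ne _ hc, hP.right_ne _ hc⟩
  · rintro _ (rfl | rfl) _ ⟨k, hk, rfl⟩
    · exact hP.not_adj_apex k (hIco hk)
    · exact hb.not_adj_right k hk.1 hk.2
  · rintro _ (rfl | rfl) _ ⟨k, rfl, rfl⟩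
    · exact hP.not_adj_apex _ hc
    · exact fun h => hP.no_common _ hc ⟨hu, h⟩

/-- A second bridge from `u` to `w` starts at or after `r`: either it is far enough from the
first one, or it starts at `q + 1`. -/
theorem hasTheta_of_isBridge_of_lt (hP : IsPalanquinPair G g m a u w) {p q r t : ℕ}
    (hb : IsBridge G g u w p q) (hqr : q < r) (hur : G.Adj u (g r)) (hrt : r ≤ t)
    (htm : t ≤ m) (hwt : G.Adj w (g t)) : HasTheta G := by
  obtain ⟨r', t', hr', ht', hb'⟩ :=
    exists_isBridge hur hwt hrt fun k hk => hP.no_common k (hk.trans htm)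
  by_cases hsep : q + 2 ≤ r'
  · obtain ⟨P, hPl, hPi⟩ := hP.exists_iPath_of_isBridge hb (by omega)
    obtain ⟨Q, hQl, hQi⟩ := hP.exists_iPath_of_isBridge hb' (by omega)
    exact hP.hasTheta_of_separated P Q hPl hQl hPi hQi hsep hb'.lt.le (by omega)
  · obtain rfl : r' = q + 1 := by omega
    exact hP.hasTheta_of_isBridge_of_adj_succ hb (by have := hb'.lt; omega) hb'.adj_left

/-- Take bridges `u → w` inside `[p, q]` and `w → u` inside `[q, r]`. A neighbour of `w` beyond
them is handled by `hasTheta_of_isBridge_of_lt` (on the reversed path if it lies to the left);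
otherwise `t₁` and `t₂` lie between the two bridges and push them apart. -/
theorem hasTheta_of_straddle (hP : IsPalanquinPair G g m a u w) {p q r t₁ t₂ : ℕ}
    (hpq : p < q) (hqr : q < r) (hrm : r ≤ m) (hup : G.Adj u (g p)) (hwq : G.Adj w (g q))
    (hur : G.Adj u (g r)) (ht : t₁ + 2 ≤ t₂) (ht₂ : t₂ ≤ m) (hwt₁ : G.Adj w (g t₁))
    (hwt₂ : G.Adj w (g t₂)) : HasTheta G := by
  obtain ⟨p₁, q₁, hp₁, hq₁, hb₁⟩ :=
    exists_isBridge hup hwq hpq.le fun k hk => hP.no_common k (by omega)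
  obtain ⟨q₂, r₂, hq₂, hr₂, hb₂⟩ :=
    exists_isBridge hwq hur hqr.le fun k hk h => hP.no_common k (by omega) h.symm
  have := hb₁.lt
  have := hb₂.lt
  by_cases hright : r₂ < t₂
  · exact hP.hasTheta_of_isBridge_of_lt hb₁ (by omega) hb₂.adj_right hright.le ht₂ hwt₂
  by_cases hleft : t₁ < p₁
  · refine hP.reverse.hasTheta_of_isBridge_of_lt (r := m - p₁) (t := m - t₁)
      (hb₂.reverse (by omega)) (by omega) ?_ (by omega) (by omega) ?_
    · simpa [Nat.sub_sub_self (show p₁ ≤ m by omega)] using hb₁.adj_left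
    · simpa [Nat.sub_sub_self (show t₁ ≤ m by omega)] using hwt₁
  have hmid : ∀ t, p₁ ≤ t → t ≤ r₂ → G.Adj w (g t) → q₁ ≤ t ∧ t ≤ q₂ := fun t h₁ h₂ hwt =>
    ⟨not_lt.1 fun h => hb₁.not_adj_right t h₁ h hwt, not_lt.1 fun h => hb₂.not_adj_left t h h₂ hwt⟩
  have := hmid t₁ (by omega) (by omega) hwt₁
  have := hmid t₂ (by omega) (by omega) hwt₂
  obtain ⟨P, hPl, hPi⟩ := hP.exists_iPath_of_isBridge hb₁ (by omega)
  obtain ⟨Q, hQl, hQi⟩ := hP.exists_iPath_of_isBridge_swap hb₂ (by omega)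
  exact hP.hasTheta_of_separated P Q hPl hQl hPi hQi (by omega) (by omega) (by omega)

end IsPalanquinPair

end PalanquinPair

section Alignment

variable {V : Type*} {G : SimpleGraph V}

namespace IndPath

/-- The vertices of `L` as a sequence, padded beyond `L.n - 1` with the last vertex. -/
def toSeq (L : IndPath G) (k : ℕ) : V :=
  L.f ⟨min k (L.n - 1), by have := L.pos; omega⟩

theorem toSeq_val (L : IndPath G) (i : Fin L.n) : L.toSeq i = L.f i := by
  unfold toSeq
  congr
  have := i.2
  omega

theorem toSeq_mem_support (L : IndPath G) (k : ℕ) : L.toSeq k ∈ L.support :=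
  ⟨_, rfl⟩

theorem isInducedPathSeq_toSeq (L : IndPath G) : IsInducedPathSeq G L.toSeq (L.n - 1) where
  injOn a ha b hb h := by
    have := Fin.val_eq_of_eq (L.f.injective h)
    simp only [Set.mem_Iic] at ha hb
    simp only at this
    omega
  adj_iff_of_lt a b hab hb := by
    unfold toSeq
    rw [L.f.map_rel_iff, pathGraph_adj]
    simp only
    omega

end IndPath

def Straddles (G : SimpleGraph V) (L : IndPath G) (u w : V) : Prop :=
  ∃ p q r : Fin L.n, p < q ∧ q < r ∧ G.Adj u (L.f p) ∧ G.Adj w (L.f q) ∧ G.Adj u (L.f r)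

def AttachedBefore (G : SimpleGraph V) (L : IndPath G) (u w : V) : Prop :=
  ∀ i j : Fin L.n, G.Adj u (L.f i) → G.Adj w (L.f j) → i < j

theorem attachedBefore_or_of_not_straddles {L : IndPath G} {u w : V}
    (hcom : ∀ i, ¬ (G.Adj u (L.f i) ∧ G.Adj w (L.f i))) (huw : ¬ Straddles G L u w)
    (hwu : ¬ Straddles G L w u) : AttachedBefore G L u w ∨ AttachedBefore G L w u := by
  unfold AttachedBefore
  by_contra! h
  obtain ⟨⟨i, j, hui, hwj, hji⟩, ⟨j', i', hwj', hui', hij'⟩⟩ := h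
  have hji : j < i := lt_of_le_of_ne hji fun h => hcom i ⟨hui, h ▸ hwj⟩
  rcases lt_or_gt_of_ne (show i' ≠ j from fun h => hcom j ⟨h ▸ hui', hwj⟩) with h | h
  · exact huw ⟨i', j, i, h, hji, hui', hwj, hui⟩
  · exact hwu ⟨j, i', j', h, lt_of_le_of_ne hij' fun h => hcom j' ⟨h ▸ hui', hwj'⟩, hwj, hui',
      hwj'⟩

theorem UglyFor.exists_far_nbrs {L : IndPath G} {w : V} (h : UglyFor G L.support w) :
    ∃ i j : Fin L.n, (i : ℕ) + 2 ≤ j ∧ G.Adj w (L.f i) ∧ G.Adj w (L.f j) := by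
  simp only [UglyFor, SimpleGraph.isClique_iff, Set.Pairwise, not_forall] at h
  obtain ⟨_, ⟨⟨i, rfl⟩, hwi⟩, _, ⟨⟨j, rfl⟩, hwj⟩, hne, hij⟩ := h
  rw [L.f.map_rel_iff, pathGraph_adj] at hij
  have : (i : ℕ) ≠ j := fun h => hne (congrArg L.f (Fin.ext h))
  rcases lt_or_gt_of_ne this with h | h
  · exact ⟨i, j, by omega, hwi, hwj⟩
  · exact ⟨j, i, by omega, hwj, hwi⟩

theorem Set.Finite.exists_enum_strictMono {S : Set V} (hS : S.Finite) {key : V → ℕ}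
    (hkey : Set.InjOn key S) :
    ∃ π : Fin S.ncard → V, Function.Injective π ∧ Set.range π = S ∧ StrictMono (key ∘ π) := by
  classical
  have hcard : (hS.toFinset.image key).card = S.ncard := by
    rw [Finset.card_image_of_injOn (by simpa using hkey), Set.ncard_eq_toFinset_card S hS]
  set e := (hS.toFinset.image key).orderEmbOfFin hcard
  have hmem : ∀ i, ∃ v ∈ S, key v = e i := fun i => by
    have := (hS.toFinset.image key).orderEmbOfFin_mem hcard i
    simpa only [Finset.mem_image, Set.Finite.mem_toFinset] using this
  choose π hπS hπ using hmem
  refine ⟨π, fun i j h => e.injective ?_, Set.Subset.antisymm ?_ fun v hv => ?_, ?_⟩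
  · rw [← hπ i, ← hπ j, h]
  · rintro _ ⟨i, rfl⟩
    exact hπS i
  · have : key v ∈ Set.range e := by
      rw [Finset.range_orderEmbOfFin]
      simpa using ⟨v, hv, rfl⟩
    obtain ⟨i, hi⟩ := this
    exact ⟨i, hkey (hπS i) hv (by rw [hπ, hi])⟩
  · intro i j hij
    simpa only [Function.comp_apply, hπ] using e.strictMono hij

theorem exists_enum_attachedBefore {L : IndPath G} {S : Set V} {s : ℕ} (hS : S.Finite)
    (hcard : S.ncard = s) (hnbr : ∀ v ∈ S, ∃ i, G.Adj v (L.f i))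
    (hsep : ∀ u ∈ S, ∀ w ∈ S, u ≠ w → AttachedBefore G L u w ∨ AttachedBefore G L w u) :
    ∃ π : Fin s → V, Function.Injective π ∧ Set.range π = S ∧
      ∀ i j, i < j → AttachedBefore G L (π i) (π j) := by
  subst hcard
  set key : V → ℕ := fun v => sInf {k | ∃ i : Fin L.n, (i : ℕ) = k ∧ G.Adj v (L.f i)}
  have hkey : ∀ v ∈ S, ∃ i : Fin L.n, (i : ℕ) = key v ∧ G.Adj v (L.f i) := fun v hv =>
    Nat.sInf_mem (s := {k | ∃ i : Fin L.n, (i : ℕ) = k ∧ G.Adj v (L.f i)})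
      (let ⟨i, hi⟩ := hnbr v hv; ⟨i, i, rfl, hi⟩)
  have hlt : ∀ u ∈ S, ∀ w ∈ S, AttachedBefore G L u w → key u < key w := fun u hu w hw h => by
    obtain ⟨i, hi, hui⟩ := hkey u hu
    obtain ⟨j, hj, hwj⟩ := hkey w hw
    rw [← hi, ← hj]
    exact h i j hui hwj
  have hinj : Set.InjOn key S := fun u hu w hw h => by
    by_contra hne
    rcases hsep u hu w hw hne with h' | h'
    · exact (hlt u hu w hw h').ne h
    · exact (hlt w hw u hu h').ne h.symm
  obtain ⟨π, hπinj, hπrange, hπmono⟩ := hS.exists_enum_strictMono hinj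
  have hπS : ∀ i, π i ∈ S := fun i => hπrange ▸ Set.mem_range_self i
  refine ⟨π, hπinj, hπrange, fun i j hij => ?_⟩
  refine (hsep _ (hπS i) _ (hπS j) (hπinj.ne hij.ne)).resolve_right fun h => ?_
  exact (hπmono hij).not_gt (hlt _ (hπS j) _ (hπS i) h)

end Alignment

namespace Palanquin

variable {V : Type*} {G : SimpleGraph V} {s : ℕ} {u w : V}

theorem isPalanquinPair (P : Palanquin G s 1) (hu : u ∈ P.S) (hw : w ∈ P.S) (hne : u ≠ w)
    (hcom : ¬ ∃ v ∈ (P.L 0).support, G.Adj u v ∧ G.Adj w v) :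
    IsPalanquinPair G (P.L 0).toSeq ((P.L 0).n - 1) P.a u w where
  path := (P.L 0).isInducedPathSeq_toSeq
  adj_left := P.sub hu
  adj_right := P.sub hw
  not_adj := P.stable u hu w hw
  ne := hne
  apex_ne k _ h := Set.disjoint_left.1 (P.avoid 0) ((P.L 0).toSeq_mem_support k)
    (h ▸ Set.mem_insert _ _)
  not_adj_apex k _ := P.anti 0 _ ((P.L 0).toSeq_mem_support k)
  left_ne k _ h := Set.disjoint_left.1 (P.avoid 0) ((P.L 0).toSeq_mem_support k)
    (h ▸ Set.mem_insert_of_mem _ hu)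
  right_ne k _ h := Set.disjoint_left.1 (P.avoid 0) ((P.L 0).toSeq_mem_support k)
    (h ▸ Set.mem_insert_of_mem _ hw)
  no_common k _ h := hcom ⟨_, (P.L 0).toSeq_mem_support k, h⟩

theorem not_straddles (hTheta : ¬ HasTheta G) (P : Palanquin G s 1)
    (hu : u ∈ P.S) (hw : w ∈ P.S) (hne : u ≠ w)
    (hcom : ¬ ∃ v ∈ (P.L 0).support, G.Adj u v ∧ G.Adj w v)
    (hbu : BadFor G (P.L 0).support u ∨ UglyFor G (P.L 0).support w) :
    ¬ Straddles G (P.L 0) u w := by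
  rintro ⟨p, q, r, hpq, hqr, hup, hwq, hur⟩
  rcases hbu with hbad | hugly
  · have hpr := hbad.1 ⟨⟨p, rfl⟩, hup⟩ ⟨⟨r, rfl⟩, hur⟩ ((P.L 0).f.injective.ne (hpq.trans hqr).ne)
    rw [(P.L 0).f.map_rel_iff, pathGraph_adj] at hpr
    rw [Fin.lt_def] at hpq hqr
    omega
  · obtain ⟨t₁, t₂, ht, hwt₁, hwt₂⟩ := hugly.exists_far_nbrs
    simp only [← IndPath.toSeq_val] at hup hwq hur hwt₁ hwt₂
    exact hTheta ((P.isPalanquinPair hu hw hne hcom).hasTheta_of_straddle hpq hqr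
      (Nat.le_sub_one_of_lt r.2) hup hwq hur ht (Nat.le_sub_one_of_lt t₂.2) hwt₁ hwt₂)

end Palanquin

theorem statement_13_general (s : ℕ) (hs : 1 ≤ s) {V : Type} (G : SimpleGraph V)
    (hTheta : ¬ HasTheta G) (P : Palanquin G s 1) (x : V)
    (hx : x = (P.L 0).first ∨ x = (P.L 0).last)
    (hcom : ∀ u ∈ P.S, ∀ w ∈ P.S, u ≠ w →
      ¬ ∃ u' ∈ (P.L 0).support, G.Adj u u' ∧ G.Adj w u')
    (hbu : (∀ u ∈ P.S, BadFor G (P.L 0).support u) ∨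
           (∀ u ∈ P.S, UglyFor G (P.L 0).support u)) :
    ∃ π : Fin s → V, IsAlignment G s P.S (P.L 0) x π := by
  have hnbr : ∀ v ∈ P.S, ∃ i, G.Adj v ((P.L 0).f i) := fun v hv =>
    let ⟨_, ⟨i, rfl⟩, h⟩ := P.nbr v hv 0; ⟨i, h⟩
  have hstr : ∀ u ∈ P.S, ∀ w ∈ P.S, u ≠ w → ¬ Straddles G (P.L 0) u w :=
    fun u hu w hw hne => P.not_straddles hTheta hu hw hne (hcom u hu w hw hne)
      (hbu.imp (· u hu) (· w hw))
  have hsep : ∀ u ∈ P.S, ∀ w ∈ P.S, u ≠ w →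
      AttachedBefore G (P.L 0) u w ∨ AttachedBefore G (P.L 0) w u := fun u hu w hw hne =>
    attachedBefore_or_of_not_straddles (fun i h => hcom u hu w hw hne ⟨_, ⟨i, rfl⟩, h⟩)
      (hstr u hu w hw hne) (hstr w hw u hu hne.symm)
  obtain ⟨π, hinj, hrange, hord⟩ :=
    exists_enum_attachedBefore (Set.finite_of_ncard_pos (by rw [P.card]; omega)) P.card hnbr hsep
  have hdisj : Disjoint P.S (P.L 0).support :=
    (P.avoid 0).symm.mono_left (Set.subset_insert _ _)
  rcases hx with rfl | rfl
  · exact ⟨π, P.stable, P.card, hinj, hrange, hdisj, fun v hv => P.nbr v hv 0,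
      Or.inl ⟨rfl, hord⟩⟩
  · refine ⟨π ∘ Fin.rev, P.stable, P.card, hinj.comp Fin.rev_injective, ?_, hdisj,
      fun v hv => P.nbr v hv 0, Or.inr ⟨rfl, fun i j hij ii jj h₁ h₂ => ?_⟩⟩
    · rw [Set.range_comp, Fin.rev_surjective.range_eq, Set.image_univ, hrange]
    · exact hord _ _ (Fin.rev_lt_rev.2 hij) jj ii h₂ h₁

/-- let `G` be theta-free, `(a, S, {L})` an `(s,1)`-palanquin in `G` and
`x` an end of `L`. If no two vertices of `S` have a common neighbor in `L`, and all
vertices of `S` are `L`-bad or all are `L`-ugly, then there is a bijection `π` making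
`(S, L, x, π)` an `s`-alignment in `G`. -/
theorem statement_13 (s : ℕ) (hs : 1 ≤ s) {V : Type} [Fintype V] (G : SimpleGraph V)
    (hTheta : ¬ HasTheta G) (P : Palanquin G s 1) (x : V)
    (hx : x = (P.L 0).first ∨ x = (P.L 0).last)
    (hcom : ∀ u ∈ P.S, ∀ w ∈ P.S, u ≠ w →
      ¬ ∃ u' ∈ (P.L 0).support, G.Adj u u' ∧ G.Adj w u')
    (hbu : (∀ u ∈ P.S, BadFor G (P.L 0).support u) ∨
           (∀ u ∈ P.S, UglyFor G (P.L 0).support u)) :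
    ∃ π : Fin s → V, IsAlignment G s P.S (P.L 0) x π :=
  statement_13_general s hs G hTheta P x hx hcom hbu
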